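/- If c = (S, W) is an atom cut of the support flowgraph of a logic program Π w.r.t. a body-saturated assignment A, then every body in ES(W ∩ atoms(Π), Π) \ A^F is the body of some rule r with front(c) ∩ body(r)+ ≠ ∅. -/

import Mathlib

/-- A rule of a normal logic program. -/
structure LPRule (P : Type) where
  head : P
  pos : Finset P
  neg : Finset P
deriving DecidableEq

/-- A body is identified by its positive and negative parts. -/
abbrev LPBody (P : Type) := Finset P × Finset P

def LPRule.body {P : Type} (r : LPRule P) : LPBody P := (r.pos, r.neg)

/-- The atoms occurring in a program. -/
def lpAtoms {P : Type} (Pi : Finset (LPRule P)) : Set P :=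
  {p | ∃ r ∈ Pi, p = r.head ∨ p ∈ r.pos ∨ p ∈ r.neg}

/-- The bodies occurring in a program. -/
def lpBodies {P : Type} (Pi : Finset (LPRule P)) : Set (LPBody P) :=
  {b | ∃ r ∈ Pi, r.body = b}

/-- An assignment, represented by its true part and its false part,
over atoms and bodies. -/
structure LPAssign (P : Type) where
  atomT : Set P
  atomF : Set P
  bodyT : Set (LPBody P)
  bodyF : Set (LPBody P)

/-- A is body-saturated: every body containing a false positive atom or a
true negated atom is assigned false. -/
def bodySaturated {P : Type} (Pi : Finset (LPRule P)) (A : LPAssign P) : Prop :=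
  ∀ b ∈ lpBodies Pi,
    (((b.1 : Set P) ∩ A.atomF) ∪ ((b.2 : Set P) ∩ A.atomT)).Nonempty → b ∈ A.bodyF

/-- External support of a set of atoms. -/
def extSupport {P : Type} (Pi : Finset (LPRule P)) (U : Set P) : Set (LPBody P) :=
  {b | ∃ r ∈ Pi, r.body = b ∧ r.head ∈ U ∧ (r.pos : Set P) ∩ U = ∅}

/-- A is unfounded-free: every atom of a set whose non-false external support
is empty is assigned false. -/
def unfoundedFree {P : Type} (Pi : Finset (LPRule P)) (A : LPAssign P) : Prop :=
  ∀ U ⊆ lpAtoms Pi, extSupport Pi U \ A.bodyF = ∅ → U ⊆ A.atomF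

/-- Nodes of the dependency graph / support flowgraph. -/
inductive LPNode (P : Type) where
  | top : LPNode P
  | atom : P → LPNode P
  | body : LPBody P → LPNode P
deriving DecidableEq

/-- Edges of the dependency graph DG(Pi). -/
def dgEdge {P : Type} (Pi : Finset (LPRule P)) : LPNode P → LPNode P → Prop :=
  fun u v =>
    (∃ r ∈ Pi, u = LPNode.body r.body ∧ v = LPNode.atom r.head) ∨
    (∃ r ∈ Pi, ∃ p ∈ r.pos, u = LPNode.atom p ∧ v = LPNode.body r.body)

/-- Being in the same strongly connected component of DG(Pi). -/
def sameSCC {P : Type} (Pi : Finset (LPRule P)) (u v : LPNode P) : Prop :=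
  Relation.ReflTransGen (dgEdge Pi) u v ∧ Relation.ReflTransGen (dgEdge Pi) v u

/-- The atoms in the same strongly connected component as a body. -/
def sccAtoms {P : Type} (Pi : Finset (LPRule P)) (b : LPBody P) : Set P :=
  {p | sameSCC Pi (LPNode.atom p) (LPNode.body b)}

open Classical in
/-- φ(β): the positive body, restricted to β's SCC when that restriction
is nonempty. -/
noncomputable def phi {P : Type} (Pi : Finset (LPRule P)) (b : LPBody P) : Set P :=
  if sccAtoms Pi b ∩ (b.1 : Set P) = ∅ then (b.1 : Set P)
  else sccAtoms Pi b ∩ (b.1 : Set P)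

/-- Edges of the support flowgraph FG(Pi, A). -/
def fgEdge {P : Type} (Pi : Finset (LPRule P)) (A : LPAssign P) :
    LPNode P → LPNode P → Prop :=
  fun u v =>
    (∃ b p, u = LPNode.body b ∧ v = LPNode.atom p ∧
      (∃ r ∈ Pi, r.head = p ∧ r.body = b) ∧ b ∉ A.bodyF) ∨
    (∃ p b, u = LPNode.atom p ∧ v = LPNode.body b ∧
      b ∈ lpBodies Pi ∧ p ∈ phi Pi b ∧ p ∉ A.atomF) ∨
    (∃ b, u = LPNode.top ∧ v = LPNode.body b ∧ b ∈ lpBodies Pi ∧ phi Pi b = ∅)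

/-- A path from `s` to `t` in a directed graph given by edge relation `E`. -/
def IsPath {V : Type} (E : V → V → Prop) (s t : V) (l : List V) : Prop :=
  l.Chain' E ∧ l.head? = some s ∧ l.getLast? = some t

/-- `u` dominates `v` in the flowgraph with source `s`: every path from `s`
to `v` passes through `u`. -/
def Dominates {V : Type} (E : V → V → Prop) (s u v : V) : Prop :=
  ∀ l : List V, IsPath E s v l → u ∈ l

/-- A cut is a partition of the nodes into two disjoint subsets. -/
def IsCut {V : Type} (S W : Set V) : Prop := S ∪ W = Set.univ ∧ S ∩ W = ∅

/-- The nodes of S having an edge into W. -/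
def cutFront {V : Type} (E : V → V → Prop) (S W : Set V) : Set V :=
  {u | u ∈ S ∧ ∃ v ∈ W, E u v}

/-- The nodes of W having an edge into S. -/
def cutBack {V : Type} (E : V → V → Prop) (S W : Set V) : Set V :=
  {u | u ∈ W ∧ ∃ v ∈ S, E u v}

/-- A support cut of FG(Pi,A). -/
def SupportCut {P : Type} (Pi : Finset (LPRule P)) (A : LPAssign P)
    (S W : Set (LPNode P)) : Prop :=
  IsCut S W ∧ LPNode.top ∈ S ∧
  (∀ n ∈ cutFront (fgEdge Pi A) S W, ∃ b ∈ lpBodies Pi, n = LPNode.body b) ∧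
  (∀ n ∈ cutBack (fgEdge Pi A) S W, ∃ b ∈ lpBodies Pi, n = LPNode.body b)

/-- An atom cut of FG(Pi,A). -/
def AtomCut {P : Type} (Pi : Finset (LPRule P)) (A : LPAssign P)
    (S W : Set (LPNode P)) : Prop :=
  IsCut S W ∧ LPNode.top ∈ S ∧
  (∀ n ∈ cutFront (fgEdge Pi A) S W, ∃ p ∈ lpAtoms Pi, n = LPNode.atom p) ∧
  (∀ n ∈ cutBack (fgEdge Pi A) S W, ∃ b ∈ lpBodies Pi, n = LPNode.body b)

/-- A unary logic program: each rule has at most one positive body atom. -/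
def UnaryProgram {P : Type} (Pi : Finset (LPRule P)) : Prop :=
  ∀ r ∈ Pi, r.pos.card ≤ 1

/-- A component-unary logic program: each rule has at most one positive body
atom in the strongly connected component of its body. -/
def ComponentUnary {P : Type} (Pi : Finset (LPRule P)) : Prop :=
  ∀ r ∈ Pi, ((r.pos : Set P) ∩ sccAtoms Pi r.body).Subsingleton

/-- A loop: a nonempty set of atoms pairwise connected by paths in DG(Pi)
whose atoms all stay inside the set. -/
def IsLoop {P : Type} (Pi : Finset (LPRule P)) (L : Set P) : Prop :=
  L.Nonempty ∧ L ⊆ lpAtoms Pi ∧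
  ∀ p ∈ L, ∀ q ∈ L, ∃ l : List (LPNode P),
    IsPath (dgEdge Pi) (LPNode.atom p) (LPNode.atom q) l ∧
    ∀ a : P, LPNode.atom a ∈ l → a ∈ L

/-- `M` is a model of the reduct of `Pi` w.r.t. `X`. -/
def ReductModel {P : Type} (Pi : Finset (LPRule P)) (X M : Set P) : Prop :=
  ∀ r ∈ Pi, (r.neg : Set P) ∩ X = ∅ → (r.pos : Set P) ⊆ M → r.head ∈ M

/-- `X` is an answer set of `Pi`: the least model of the reduct w.r.t. `X`. -/
def IsAnswerSet {P : Type} (Pi : Finset (LPRule P)) (X : Set P) : Prop :=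
  ReductModel Pi X X ∧ ∀ M, ReductModel Pi X M → X ⊆ M

/-- for an atom cut, every non-false external support of the atoms
of W is the body of a rule whose positive body meets front(c). -/
theorem atom_cut_external_support {P : Type} [DecidableEq P]
    (Pi : Finset (LPRule P)) (A : LPAssign P) (hA : bodySaturated Pi A)
    (S W : Set (LPNode P)) (hc : AtomCut Pi A S W) :
    ∀ b ∈ extSupport Pi {p | p ∈ lpAtoms Pi ∧ LPNode.atom p ∈ W} \ A.bodyF,
      ∃ r ∈ Pi, r.body = b ∧ ∃ p ∈ r.pos, LPNode.atom p ∈ cutFront (fgEdge Pi A) S W := by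
  rintro b ⟨⟨r, hrPi, hrb, ⟨hhA, hhW⟩, hpos⟩, hbF⟩
  obtain ⟨⟨hcov, hdisj⟩, htop, hfront, hback⟩ := hc
  have hbodies : b ∈ lpBodies Pi := ⟨r, hrPi, hrb⟩
  have hb1 : b.1 = r.pos := by rw [← hrb]; rfl
  have hSW : ∀ n : LPNode P, n ∈ S ∨ n ∈ W := by
    intro n
    have : n ∈ S ∪ W := by rw [hcov]; trivial
    exact this
  -- edge body b → atom r.head
  have hedge1 : fgEdge Pi A (LPNode.body b) (LPNode.atom r.head) :=
    Or.inl ⟨b, r.head, rfl, rfl, ⟨r, hrPi, rfl, hrb⟩, hbF⟩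
  have hbW : LPNode.body b ∈ W := by
    rcases hSW (LPNode.body b) with hS | hW
    · exfalso
      obtain ⟨p, _, hp⟩ := hfront _ ⟨hS, LPNode.atom r.head, hhW, hedge1⟩
      exact nomatch hp
    · exact hW
  by_cases hphi : phi Pi b = ∅
  · exfalso
    have hedge0 : fgEdge Pi A LPNode.top (LPNode.body b) :=
      Or.inr (Or.inr ⟨b, rfl, rfl, hbodies, hphi⟩)
    obtain ⟨p, _, hp⟩ := hfront _ ⟨htop, LPNode.body b, hbW, hedge0⟩
    exact nomatch hp
  · obtain ⟨p, hp⟩ := Set.nonempty_iff_ne_empty.mpr hphi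
    have hpb1 : p ∈ (b.1 : Set P) := by
      unfold phi at hp
      split at hp
      · exact hp
      · exact hp.2
    have hpr : p ∈ r.pos := by rwa [hb1] at hpb1
    have hpF : p ∉ A.atomF := by
      intro hF
      exact hbF (hA b hbodies ⟨p, Or.inl ⟨hpb1, hF⟩⟩)
    have hpS : LPNode.atom p ∈ S := by
      rcases hSW (LPNode.atom p) with hS | hW
      · exact hS
      · exfalso
        have hpU : p ∈ (r.pos : Set P) ∩ {p | p ∈ lpAtoms Pi ∧ LPNode.atom p ∈ W} :=
          ⟨hpr, ⟨r, hrPi, Or.inr (Or.inl hpr)⟩, hW⟩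
        rw [hpos] at hpU
        exact hpU
    have hedge2 : fgEdge Pi A (LPNode.atom p) (LPNode.body b) :=
      Or.inr (Or.inl ⟨p, b, rfl, rfl, hbodies, hp, hpF⟩)
    exact ⟨r, hrPi, hrb, p, hpr, hpS, LPNode.body b, hbW, hedge2⟩
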